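/- In the sequent calculus for propositional Core logic, the sequent ¬(D → C), (T ∧ D) → C ⊢ ∅ is derivable whenever T is a formula such that ⊢ T is derivable (e.g., T = A → A). -/
import Mathlib


inductive Form : Type where
  | var : Nat → Form
  | neg : Form → Form
  | conj : Form → Form → Form
  | disj : Form → Form → Form
  | imp : Form → Form → Form
deriving DecidableEq

open Form

/-- Sequent calculus for propositional Core logic (Tennant).
Contexts are finite sets of formulas; the conclusion is `some C` or `none`
(the empty / absurdity conclusion ⊥). -/
inductive Core : Finset Form → Option Form → Prop where
  | ax (A : Form) : Core {A} (some A)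
  | lneg {Δ : Finset Form} {A : Form} :
      Core Δ (some A) → Core (insert (Form.neg A) Δ) none
  | rneg {Δ : Finset Form} {A : Form} :
      Core (insert A Δ) none → Core Δ (some (Form.neg A))
  | landL {Δ : Finset Form} {x : Option Form} (A B : Form) :
      Core Δ x → (Δ ∩ {A, B}).Nonempty →
      Core (insert (Form.conj A B) (Δ \ {A, B})) x
  | randR {Δ Γ : Finset Form} {A B : Form} :
      Core Δ (some A) → Core Γ (some B) → Core (Δ ∪ Γ) (some (Form.conj A B))
  | lor {Δ Γ : Finset Form} {A B : Form} {x y z : Option Form} :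
      Core (insert A Δ) x → Core (insert B Γ) y →
      ((x = z ∧ (y = z ∨ y = none)) ∨ (y = z ∧ x = none)) →
      Core (insert (Form.disj A B) (Δ ∪ Γ)) z
  | ror1 {Δ : Finset Form} {A : Form} (B : Form) :
      Core Δ (some A) → Core Δ (some (Form.disj A B))
  | ror2 {Δ : Finset Form} {B : Form} (A : Form) :
      Core Δ (some B) → Core Δ (some (Form.disj A B))
  | limp {Δ Γ : Finset Form} {A B : Form} {x : Option Form} :
      Core Δ (some A) → Core (insert B Γ) x →
      Core (insert (Form.imp A B) (Δ ∪ Γ)) x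
  | rimpa {Δ : Finset Form} {A : Form} (B : Form) :
      Core (insert A Δ) none → Core Δ (some (Form.imp A B))
  | rimpb {Δ : Finset Form} {B : Form} (A : Form) :
      Core Δ (some B) → Core (Δ \ {A}) (some (Form.imp A B))

/-- ¬(D → C), (T ∧ D) → C ⊢ ∅ is Core-derivable whenever ⊢ T is. -/
theorem core_first_contradiction (T D C : Form)
    (hT : Core (∅ : Finset Form) (some T)) :
    Core ({Form.neg (Form.imp D C), Form.imp (Form.conj T D) C} : Finset Form)
      none := by
  have hne : D ≠ Form.imp (Form.conj T D) C := by
    intro h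
    have : sizeOf D = sizeOf (Form.imp (Form.conj T D) C) := by rw [← h]
    simp at this
    omega
  have hTD : Core ({D} : Finset Form) (some (Form.conj T D)) := by
    have := Core.randR hT (Core.ax D)
    simpa using this
  have hC : Core (insert (Form.imp (Form.conj T D) C) ({D} ∪ ∅)) (some C) :=
    Core.limp hTD (by simpa using Core.ax C)
  have hC' : Core ({Form.imp (Form.conj T D) C, D} : Finset Form) (some C) := by
    simpa using hC
  have hDC : Core (({Form.imp (Form.conj T D) C, D} : Finset Form) \ {D})
      (some (Form.imp D C)) := Core.rimpb D hC'
  have heq : ({Form.imp (Form.conj T D) C, D} : Finset Form) \ {D}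
      = {Form.imp (Form.conj T D) C} := by
    ext x
    simp only [Finset.mem_sdiff, Finset.mem_insert, Finset.mem_singleton]
    constructor
    · rintro ⟨h1 | h1, h2⟩ <;> simp_all
    · rintro rfl
      exact ⟨Or.inl rfl, fun h => hne (by rw [h])⟩
  rw [heq] at hDC
  have := Core.lneg hDC
  simpa using this
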